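/- Change of variables formula for the divergence: let X : ℝ³ → ℝ³ be a C¹-diffeomorphism whose Jacobian matrix ∂X/∂y is continuously differentiable and everywhere invertible, and let H : ℝ³ → ℝ³ be a C¹ vector field. Then for every y ∈ ℝ³, (div_x H)(X(y)) = det(∂X/∂y)⁻¹ · div_y( det(∂X/∂y) · (∂X/∂y)⁻¹ · H(X(y)) ). -/

import Mathlib

noncomputable section

open MeasureTheory Real Filter Set Matrix
open scoped ENNReal Topology FourierTransform

set_option linter.unusedVariables false

namespace Paper

abbrev Sp (n : ℕ) := EuclideanSpace ℝ (Fin n)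
abbrev V3 := Fin 3 → ℝ
abbrev M3 := Matrix (Fin 3) (Fin 3) ℝ

/-- A Littlewood–Paley dyadic bump function. -/
structure IsLPBump (θ : ℝ → ℝ) : Prop where
  smooth : ContDiff ℝ (⊤ : ℕ∞) θ
  support : ∀ τ : ℝ, θ τ ≠ 0 → (3/4 : ℝ) ≤ τ ∧ τ ≤ 8/3
  partition : ∀ τ : ℝ, 0 < τ → HasSum (fun j : ℤ => θ ((2 : ℝ) ^ (-j) * τ)) 1

variable {n : ℕ}

/-- the isotropic Littlewood–Paley block Δ_j f = F⁻¹(θ(2^{-j}|ξ|) F f). -/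
def lpBlock (θ : ℝ → ℝ) (j : ℤ) (f : Sp n → ℂ) : Sp n → ℂ :=
  𝓕⁻ (fun ξ => (θ ((2 : ℝ) ^ (-j) * ‖ξ‖) : ℂ) * 𝓕 f ξ)

/-- the vertical Littlewood–Paley block Δ_ℓ^v f = F⁻¹(θ(2^{-ℓ}|ξ₃|) F f). -/
def lpBlockV (θ : ℝ → ℝ) (ℓ : ℤ) (f : Sp 3 → ℂ) : Sp 3 → ℂ :=
  𝓕⁻ (fun ξ => (θ ((2 : ℝ) ^ (-ℓ) * |ξ 2|) : ℂ) * 𝓕 f ξ)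

def tw (s : ℝ) (j : ℤ) : ℝ≥0∞ := ENNReal.ofReal ((2 : ℝ) ^ (s * (j : ℝ)))

/-- ℓ^r norm over ℤ of a family of extended reals -/
def lnorm (r : ℝ≥0∞) (g : ℤ → ℝ≥0∞) : ℝ≥0∞ :=
  if r = ∞ then ⨆ j, g j else (∑' j, g j ^ r.toReal) ^ (1 / r.toReal)

def eL (p : ℝ≥0∞) (f : Sp n → ℂ) : ℝ≥0∞ := eLpNorm f p volume

/-- anisotropic Besov norm 𝓑^{s₁,s₂}_{r₁,r₂} -/
def aB (θ : ℝ → ℝ) (s₁ s₂ : ℝ) (r₁ r₂ : ℝ≥0∞) (f : Sp 3 → ℂ) : ℝ≥0∞ :=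
  lnorm r₁ fun j => tw s₁ j * lnorm r₂ fun ℓ => tw s₂ ℓ * eL 2 (lpBlock θ j (lpBlockV θ ℓ f))

/-- anisotropic Besov norm 𝓑^{s₁,s₂} = 𝓑^{s₁,s₂}_{1,1} -/
def aB11 (θ : ℝ → ℝ) (s₁ s₂ : ℝ) (f : Sp 3 → ℂ) : ℝ≥0∞ := aB θ s₁ s₂ 1 1 f

/-- homogeneous Besov norm Ḃ^s_{p,r} -/
def hB (θ : ℝ → ℝ) (s : ℝ) (p r : ℝ≥0∞) (f : Sp n → ℂ) : ℝ≥0∞ :=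
  lnorm r fun j => tw s j * eL p (lpBlock θ j f)

/-- Ḃ^s := Ḃ^s_{2,1} -/
def hBs (θ : ℝ → ℝ) (s : ℝ) (f : Sp n → ℂ) : ℝ≥0∞ := hB θ s 2 1 f

/-- inhomogeneous Sobolev H^s norm -/
def sobN (s : ℝ) (f : Sp n → ℂ) : ℝ≥0∞ :=
  (∫⁻ ξ, ENNReal.ofReal ((1 + ‖ξ‖ ^ 2) ^ s) * (‖𝓕 f ξ‖₊ : ℝ≥0∞) ^ 2) ^ (1/2 : ℝ)

/-- homogeneous Sobolev Ḣ^s norm -/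
def hSobN (s : ℝ) (f : Sp n → ℂ) : ℝ≥0∞ :=
  (∫⁻ ξ, ENNReal.ofReal (‖ξ‖ ^ (2 * s)) * (‖𝓕 f ξ‖₊ : ℝ≥0∞) ^ 2) ^ (1/2 : ℝ)

def cpx (f : Sp n → ℝ) : Sp n → ℂ := fun x => (f x : ℂ)

def aBv (θ : ℝ → ℝ) (s₁ s₂ : ℝ) (r₁ r₂ : ℝ≥0∞) (f : Sp 3 → V3) : ℝ≥0∞ :=
  ∑ i : Fin 3, aB θ s₁ s₂ r₁ r₂ (cpx fun x => f x i)
def aB11v (θ : ℝ → ℝ) (s₁ s₂ : ℝ) (f : Sp 3 → V3) : ℝ≥0∞ := aBv θ s₁ s₂ 1 1 f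
def hBsv (θ : ℝ → ℝ) (s : ℝ) (f : Sp n → V3) : ℝ≥0∞ := ∑ i : Fin 3, hBs θ s (cpx fun x => f x i)
def sobNv (s : ℝ) (f : Sp n → V3) : ℝ≥0∞ := ∑ i : Fin 3, sobN s (cpx fun x => f x i)
def hSobNv (s : ℝ) (f : Sp n → V3) : ℝ≥0∞ := ∑ i : Fin 3, hSobN s (cpx fun x => f x i)
def eL2v (f : Sp n → V3) : ℝ≥0∞ := ∑ i : Fin 3, eL 2 (cpx fun x => f x i)

def aBm (θ : ℝ → ℝ) (s₁ s₂ : ℝ) (r₁ r₂ : ℝ≥0∞) (M : Sp 3 → M3) : ℝ≥0∞ :=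
  ∑ i : Fin 3, ∑ j : Fin 3, aB θ s₁ s₂ r₁ r₂ (cpx fun x => M x i j)
def aB11m (θ : ℝ → ℝ) (s₁ s₂ : ℝ) (M : Sp 3 → M3) : ℝ≥0∞ := aBm θ s₁ s₂ 1 1 M
def hBsm (θ : ℝ → ℝ) (s : ℝ) (M : Sp n → M3) : ℝ≥0∞ :=
  ∑ i : Fin 3, ∑ j : Fin 3, hBs θ s (cpx fun x => M x i j)
def sobNm (s : ℝ) (M : Sp n → M3) : ℝ≥0∞ :=
  ∑ i : Fin 3, ∑ j : Fin 3, sobN s (cpx fun x => M x i j)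

section Deriv
variable {E : Type*} [NormedAddCommGroup E] [NormedSpace ℝ E]

/-- partial derivative in the i-th coordinate direction -/
def pd (i : Fin n) (f : Sp n → E) : Sp n → E := fun x => fderiv ℝ f x (EuclideanSpace.single i 1)

/-- Laplacian -/
def lap (f : Sp n → E) : Sp n → E := fun x => ∑ i : Fin n, pd i (pd i f) x

/-- time derivative -/
def dt (Y : ℝ → Sp 3 → E) : ℝ → Sp 3 → E := fun t x => deriv (fun s => Y s x) t

end Deriv

/-- Jacobian matrix (∇Y)_{ij} = ∂_j Y^i -/
def jacM (Y : Sp 3 → V3) : Sp 3 → M3 := fun x => Matrix.of fun i j => pd j (fun y => Y y i) x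

def gradV (g : Sp 3 → ℝ) : Sp 3 → V3 := fun x i => pd i g x

def vdiv (v : Sp 3 → V3) : Sp 3 → ℝ := fun x => ∑ i : Fin 3, pd i (fun y => v y i) x

def mdiv (M : Sp 3 → M3) : Sp 3 → V3 := fun x i => ∑ j : Fin 3, pd j (fun y => M y i j) x

def tens (a b : V3) : M3 := Matrix.of fun i j => a i * b j

/-- directional derivative (v·∇)f -/
def dirD (v f : Sp 3 → V3) : Sp 3 → V3 := fun x i => ∑ j : Fin 3, v x j * pd j (fun y => f y i) x

/-- L^q norm in time on (0,t) of an ℝ≥0∞-valued quantity -/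
def eLqT (q : ℝ≥0∞) (t : ℝ) (g : ℝ → ℝ≥0∞) : ℝ≥0∞ :=
  if q = ∞ then essSup g (volume.restrict (Set.Ioc 0 t))
  else (∫⁻ τ in Set.Ioc 0 t, g τ ^ q.toReal) ^ (1 / q.toReal)

/-- Chemin–Lerner norm L̃^q_t(𝓑^{s₁,s₂}) -/
def clN (θ : ℝ → ℝ) (q : ℝ≥0∞) (t : ℝ) (s₁ s₂ : ℝ) (u : ℝ → Sp 3 → ℂ) : ℝ≥0∞ :=
  ∑' j : ℤ, ∑' ℓ : ℤ, tw s₁ j * tw s₂ ℓ *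
    eLqT q t fun τ => eL 2 (lpBlock θ j (lpBlockV θ ℓ (u τ)))

def clNv (θ : ℝ → ℝ) (q : ℝ≥0∞) (t : ℝ) (s₁ s₂ : ℝ) (u : ℝ → Sp 3 → V3) : ℝ≥0∞ :=
  ∑ i : Fin 3, clN θ q t s₁ s₂ (fun τ => cpx fun x => u τ x i)

/-- Chemin–Lerner norm L̃^q_t(Ḣ^s) -/
def clHs (θ : ℝ → ℝ) (q : ℝ≥0∞) (t : ℝ) (s : ℝ) (u : ℝ → Sp 3 → ℂ) : ℝ≥0∞ :=
  (∑' j : ℤ, (tw s j * eLqT q t fun τ => eL 2 (lpBlock θ j (u τ))) ^ 2) ^ (1/2 : ℝ)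

def clHsv (θ : ℝ → ℝ) (q : ℝ≥0∞) (t : ℝ) (s : ℝ) (u : ℝ → Sp 3 → V3) : ℝ≥0∞ :=
  ∑ i : Fin 3, clHs θ q t s (fun τ => cpx fun x => u τ x i)

/-- the Japanese bracket ⟨t⟩ -/
def jap (t : ℝ) : ℝ := Real.sqrt (1 + t ^ 2)

def e3 : V3 := fun i => if i = 2 then 1 else 0


/-- Jacobian matrix of a map ℝ³ → ℝ³ -/
def jacS (X : Sp 3 → Sp 3) : Sp 3 → M3 := fun x =>
  Matrix.of fun i j => pd j (fun y => X y i) x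


section AuxCoV
variable {n : ℕ} {E F : Type*} [NormedAddCommGroup E] [NormedSpace ℝ E]
  [NormedAddCommGroup F] [NormedSpace ℝ F]

lemma pd_clm_comp (i : Fin n) (L : E →L[ℝ] F) {f : Sp n → E}
    (hf : Differentiable ℝ f) (x : Sp n) :
    pd i (fun y => L (f y)) x = L (pd i f x) := by
  have h : fderiv ℝ (fun y => L (f y)) x = L.comp (fderiv ℝ f x) :=
    (L.hasFDerivAt.comp x (hf x).hasFDerivAt).fderiv
  simp [pd, h]

lemma pd_mul (i : Fin n) {f g : Sp n → ℝ} (hf : Differentiable ℝ f)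
    (hg : Differentiable ℝ g) (x : Sp n) :
    pd i (fun y => f y * g y) x = pd i f x * g x + f x * pd i g x := by
  simp only [pd, fderiv_fun_mul (hf x) (hg x), ContinuousLinearMap.add_apply,
    ContinuousLinearMap.smul_apply, smul_eq_mul]
  ring

lemma pd_add (i : Fin n) {f g : Sp n → E} (hf : Differentiable ℝ f)
    (hg : Differentiable ℝ g) (x : Sp n) :
    pd i (fun y => f y + g y) x = pd i f x + pd i g x := by
  simp only [pd, fderiv_fun_add (hf x) (hg x), ContinuousLinearMap.add_apply]

lemma pd_sub (i : Fin n) {f g : Sp n → E} (hf : Differentiable ℝ f)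
    (hg : Differentiable ℝ g) (x : Sp n) :
    pd i (fun y => f y - g y) x = pd i f x - pd i g x := by
  simp only [pd, fderiv_fun_sub (hf x) (hg x), ContinuousLinearMap.sub_apply]

lemma pd_neg (i : Fin n) {f : Sp n → E} (x : Sp n) :
    pd i (fun y => -f y) x = -pd i f x := by
  simp only [pd, fderiv_fun_neg, ContinuousLinearMap.neg_apply]

lemma pd_finsum {ι : Type*} (s : Finset ι) (i : Fin n) {f : ι → Sp n → E}
    (hf : ∀ j ∈ s, Differentiable ℝ (f j)) (x : Sp n) :
    pd i (fun y => ∑ j ∈ s, f j y) x = ∑ j ∈ s, pd i (f j) x := by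
  simp only [pd, fderiv_fun_sum (fun j hj => (hf j hj) x), ContinuousLinearMap.sum_apply]

lemma euclid_decomp (w : Sp 3) : w = ∑ k : Fin 3, w k • EuclideanSpace.single k (1:ℝ) := by
  ext k
  rw [Fin.sum_univ_three]
  simp [PiLp.add_apply, PiLp.smul_apply, EuclideanSpace.single_apply]
  fin_cases k <;> norm_num [Fin.ext_iff] <;> rfl

lemma clm_apply_decomp (L : Sp 3 →L[ℝ] ℝ) (w : Sp 3) :
    L w = ∑ k : Fin 3, w k * L (EuclideanSpace.single k (1:ℝ)) := by
  conv_lhs => rw [euclid_decomp w]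
  rw [map_sum]
  simp

end AuxCoV

lemma jac_symm (X : Sp 3 → Sp 3) (hX : ContDiff ℝ 1 X)
    (hJ : ∀ i j : Fin 3, ContDiff ℝ 1 (fun y => jacS X y i j)) (k a b : Fin 3) (x : Sp 3) :
    pd a (fun y => jacS X y k b) x = pd b (fun y => jacS X y k a) x := by
  set f : Sp 3 → ℝ := fun y => X y k with hfdef
  have hfc : Differentiable ℝ f :=
    (EuclideanSpace.proj (𝕜 := ℝ) k).differentiable.comp (hX.differentiable one_ne_zero)
  set f' : Sp 3 → (Sp 3 →L[ℝ] ℝ) := fderiv ℝ f with hf'def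
  have hjac : ∀ (j : Fin 3) (y : Sp 3), jacS X y k j = f' y (EuclideanSpace.single j 1) :=
    fun j y => rfl
  have hf'eq : f' = fun y => ∑ j : Fin 3,
      jacS X y k j • (EuclideanSpace.proj (𝕜 := ℝ) j : Sp 3 →L[ℝ] ℝ) := by
    funext y
    apply ContinuousLinearMap.ext
    intro w
    rw [clm_apply_decomp (f' y) w]
    simp only [ContinuousLinearMap.sum_apply, ContinuousLinearMap.smul_apply,
      smul_eq_mul, hjac]
    exact Finset.sum_congr rfl fun j _ => mul_comm _ _
  have hdiff : Differentiable ℝ f' := by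
    rw [hf'eq]
    apply Differentiable.fun_sum
    intro j _
    exact ((hJ k j).differentiable one_ne_zero).smul_const _
  have key : ∀ c d : Fin 3, pd c (fun y => jacS X y k d) x =
      fderiv ℝ f' x (EuclideanSpace.single c 1) (EuclideanSpace.single d 1) := by
    intro c d
    have h1 := pd_clm_comp c (ContinuousLinearMap.apply ℝ ℝ
      ((EuclideanSpace.single d 1 : Sp 3))) hdiff x
    simp only [ContinuousLinearMap.apply_apply] at h1
    simp only [hjac]
    exact h1
  rw [key a b, key b a]
  exact second_derivative_symmetric (fun y => (hfc y).hasFDerivAt) (hdiff x).hasFDerivAt _ _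

lemma pd_chain (X : Sp 3 → Sp 3) (hX : ContDiff ℝ 1 X) {g : Sp 3 → ℝ}
    (hg : Differentiable ℝ g) (i : Fin 3) (x : Sp 3) :
    pd i (fun y => g (X y)) x = ∑ k : Fin 3, pd k g (X x) * jacS X x k i := by
  have hXd := hX.differentiable one_ne_zero
  have hcomp : fderiv ℝ (fun y => g (X y)) x = (fderiv ℝ g (X x)).comp (fderiv ℝ X x) :=
    fderiv_comp x (hg _) (hXd x)
  have hw : ∀ k : Fin 3, fderiv ℝ X x (EuclideanSpace.single i 1) k = jacS X x k i := by
    intro k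
    have h1 : fderiv ℝ (fun y => X y k) x
        = (EuclideanSpace.proj (𝕜 := ℝ) k).comp (fderiv ℝ X x) :=
      ((EuclideanSpace.proj (𝕜 := ℝ) k).hasFDerivAt.comp x (hXd x).hasFDerivAt).fderiv
    have h2 : jacS X x k i = fderiv ℝ (fun y => X y k) x (EuclideanSpace.single i 1) := rfl
    rw [h2, h1]
    rfl
  show fderiv ℝ (fun y => g (X y)) x (EuclideanSpace.single i 1) = _
  rw [hcomp, ContinuousLinearMap.comp_apply,
    clm_apply_decomp (fderiv ℝ g (X x)) (fderiv ℝ X x (EuclideanSpace.single i 1))]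
  refine Finset.sum_congr rfl fun k _ => ?_
  rw [hw k]
  exact mul_comm _ _

lemma piola (X : Sp 3 → Sp 3) (hX : ContDiff ℝ 1 X)
    (hJ : ∀ i j : Fin 3, ContDiff ℝ 1 (fun y => jacS X y i j)) (j : Fin 3) (x : Sp 3) :
    ∑ i : Fin 3, pd i (fun y => (jacS X y).adjugate i j) x = 0 := by
  have hd : ∀ a b : Fin 3, Differentiable ℝ fun y => jacS X y a b :=
    fun a b => (hJ a b).differentiable one_ne_zero
  have hs := jac_symm X hX hJ
  have hA : ∀ (i a b c d e f g h : Fin 3),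
      pd i (fun y => jacS X y a b * jacS X y c d - jacS X y e f * jacS X y g h) x
      = pd i (fun y => jacS X y a b) x * jacS X x c d
        + jacS X x a b * pd i (fun y => jacS X y c d) x
        - (pd i (fun y => jacS X y e f) x * jacS X x g h
        + jacS X x e f * pd i (fun y => jacS X y g h) x) := by
    intro i a b c d e f g h
    rw [pd_sub i ((hd a b).fun_mul (hd c d)) ((hd e f).fun_mul (hd g h)),
      pd_mul i (hd a b) (hd c d), pd_mul i (hd e f) (hd g h)]
  have hB : ∀ (i a b c d e f g h : Fin 3),
      pd i (fun y => -(jacS X y a b * jacS X y c d) + jacS X y e f * jacS X y g h) x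
      = -(pd i (fun y => jacS X y a b) x * jacS X x c d
        + jacS X x a b * pd i (fun y => jacS X y c d) x)
        + (pd i (fun y => jacS X y e f) x * jacS X x g h
        + jacS X x e f * pd i (fun y => jacS X y g h) x) := by
    intro i a b c d e f g h
    rw [pd_add i ((hd a b).fun_mul (hd c d)).fun_neg ((hd e f).fun_mul (hd g h)),
      pd_neg, pd_mul i (hd a b) (hd c d), pd_mul i (hd e f) (hd g h)]
  have hadj : ∀ y : Sp 3, (jacS X y).adjugate =
      !![jacS X y 1 1 * jacS X y 2 2 - jacS X y 1 2 * jacS X y 2 1,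
        -(jacS X y 0 1 * jacS X y 2 2) + jacS X y 0 2 * jacS X y 2 1,
        jacS X y 0 1 * jacS X y 1 2 - jacS X y 0 2 * jacS X y 1 1;
        -(jacS X y 1 0 * jacS X y 2 2) + jacS X y 1 2 * jacS X y 2 0,
        jacS X y 0 0 * jacS X y 2 2 - jacS X y 0 2 * jacS X y 2 0,
        -(jacS X y 0 0 * jacS X y 1 2) + jacS X y 0 2 * jacS X y 1 0;
        jacS X y 1 0 * jacS X y 2 1 - jacS X y 1 1 * jacS X y 2 0,
        -(jacS X y 0 0 * jacS X y 2 1) + jacS X y 0 1 * jacS X y 2 0,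
        jacS X y 0 0 * jacS X y 1 1 - jacS X y 0 1 * jacS X y 1 0] :=
    fun y => Matrix.adjugate_fin_three _
  simp only [hadj]
  rw [Fin.sum_univ_three]
  fin_cases j <;>
  · simp only [Fin.zero_eta, Fin.mk_one, Fin.reduceFinMk, Matrix.cons_val', Matrix.cons_val_zero,
      Matrix.cons_val_one, Matrix.head_cons, Matrix.empty_val', Matrix.cons_val_fin_one,
      Matrix.head_fin_const, Matrix.cons_val_two, Matrix.tail_cons, Matrix.of_apply]
    simp only [hA, hB]
    simp only [hs 0 1 0, hs 0 2 0, hs 0 2 1, hs 1 1 0, hs 1 2 0, hs 1 2 1,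
      hs 2 1 0, hs 2 2 0, hs 2 2 1]
    ring

/-- Lemma 2.1: change of variables formula for the divergence:
(div_x H)(X(y)) = det(∂X/∂y)⁻¹ · div_y(det(∂X/∂y)·(∂X/∂y)⁻¹·H(X(y))). -/
theorem divergence_change_of_variables
    (X : Sp 3 → Sp 3) (H : Sp 3 → V3)
    (hX : ContDiff ℝ 1 X) (hXbij : Function.Bijective X)
    (hXinv : ContDiff ℝ 1 (Function.invFun X))
    (hJ : ∀ i j : Fin 3, ContDiff ℝ 1 (fun y => jacS X y i j))
    (hdet : ∀ y, (jacS X y).det ≠ 0)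
    (hH : ContDiff ℝ 1 (fun y i => H y i)) :
    ∀ y : Sp 3,
      vdiv H (X y) =
        ((jacS X y).det)⁻¹ *
          vdiv (fun y' => ((jacS X y').det • (jacS X y')⁻¹).mulVec (H (X y'))) y := by

  intro y
  have hXd : Differentiable ℝ X := hX.differentiable one_ne_zero
  have hd : ∀ a b : Fin 3, Differentiable ℝ fun y' => jacS X y' a b :=
    fun a b => (hJ a b).differentiable one_ne_zero
  have hHd : ∀ j : Fin 3, Differentiable ℝ fun z => H z j :=
    fun j => differentiable_pi.mp (hH.differentiable one_ne_zero) j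
  have hHXd : ∀ j : Fin 3, Differentiable ℝ fun y' => H (X y') j :=
    fun j => (hHd j).comp hXd
  have hdet_diff : ∀ (M : Sp 3 → M3), (∀ a b : Fin 3, Differentiable ℝ fun y' => M y' a b) →
      Differentiable ℝ fun y' => (M y').det := by
    intro M h
    simp only [Matrix.det_fin_three]
    exact (((((((h 0 0).mul (h 1 1)).mul (h 2 2)).sub
      (((h 0 0).mul (h 1 2)).mul (h 2 1))).sub
      (((h 0 1).mul (h 1 0)).mul (h 2 2))).add
      (((h 0 1).mul (h 1 2)).mul (h 2 0))).add
      (((h 0 2).mul (h 1 0)).mul (h 2 1))).sub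
      (((h 0 2).mul (h 1 1)).mul (h 2 0))
  have hadjd : ∀ a b : Fin 3, Differentiable ℝ fun y' => (jacS X y').adjugate a b := by
    intro a b
    simp only [Matrix.adjugate_apply]
    apply hdet_diff
    intro c d
    by_cases hcb : c = b
    · simp only [Matrix.updateRow_apply, hcb, if_pos rfl]
      exact differentiable_const _
    · simp only [Matrix.updateRow_apply, if_neg hcb]
      exact hd c d
  -- replace det • inv by adjugate
  have hfun : ∀ y' : Sp 3, (jacS X y').det • (jacS X y')⁻¹ = (jacS X y').adjugate := by
    intro y'
    rw [Matrix.inv_def, Ring.inverse_eq_inv', smul_smul, mul_inv_cancel₀ (hdet y'), one_smul]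
  simp only [hfun]
  have hmv : (fun y' => ((jacS X y').adjugate).mulVec (H (X y')))
      = fun y' i => ∑ j : Fin 3, (jacS X y').adjugate i j * H (X y') j := by
    funext y' i
    simp [Matrix.mulVec, dotProduct]
  rw [hmv]
  suffices hsuf : vdiv (fun y' i => ∑ j : Fin 3, (jacS X y').adjugate i j * H (X y') j) y
      = (jacS X y).det * vdiv H (X y) by
    rw [hsuf, inv_mul_cancel_left₀ (hdet y)]
  have step1 : vdiv (fun y' i => ∑ j : Fin 3, (jacS X y').adjugate i j * H (X y') j) y
      = ∑ i : Fin 3, ∑ j : Fin 3,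
          (pd i (fun y' => (jacS X y').adjugate i j) y * H (X y) j
            + (jacS X y).adjugate i j * pd i (fun y' => H (X y') j) y) := by
    refine Finset.sum_congr rfl fun i _ => ?_
    rw [pd_finsum Finset.univ i
      (fun j _ => ((hadjd i j).fun_mul (hHXd j))) y]
    exact Finset.sum_congr rfl fun j _ => pd_mul i (hadjd i j) (hHXd j) y
  rw [step1]
  have split : ∑ i : Fin 3, ∑ j : Fin 3,
      (pd i (fun y' => (jacS X y').adjugate i j) y * H (X y) j
        + (jacS X y).adjugate i j * pd i (fun y' => H (X y') j) y)
      = (∑ i : Fin 3, ∑ j : Fin 3, pd i (fun y' => (jacS X y').adjugate i j) y * H (X y) j)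
        + ∑ i : Fin 3, ∑ j : Fin 3,
            (jacS X y).adjugate i j * pd i (fun y' => H (X y') j) y := by
    rw [← Finset.sum_add_distrib]
    exact Finset.sum_congr rfl fun i _ => Finset.sum_add_distrib
  rw [split]
  have hzero : (∑ i : Fin 3, ∑ j : Fin 3,
      pd i (fun y' => (jacS X y').adjugate i j) y * H (X y) j) = 0 := by
    rw [Finset.sum_comm]
    refine Finset.sum_eq_zero fun j _ => ?_
    rw [← Finset.sum_mul, piola X hX hJ j y, zero_mul]
  rw [hzero, zero_add]
  have hc : ∀ (i j : Fin 3), pd i (fun y' => H (X y') j) y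
      = ∑ k : Fin 3, pd k (fun z => H z j) (X y) * jacS X y k i :=
    fun i j => pd_chain X hX (hHd j) i y
  simp only [hc]
  have key : ∀ k j : Fin 3, jacS X y k 0 * (jacS X y).adjugate 0 j
      + jacS X y k 1 * (jacS X y).adjugate 1 j
      + jacS X y k 2 * (jacS X y).adjugate 2 j
      = (jacS X y).det * (if k = j then (1:ℝ) else 0) := by
    intro k j
    have h1 := congrFun (congrFun (Matrix.mul_adjugate (jacS X y)) k) j
    simpa [Matrix.mul_apply, Matrix.one_apply, Fin.sum_univ_three] using h1
  have e00 := key 0 0; have e01 := key 0 1; have e02 := key 0 2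
  have e10 := key 1 0; have e11 := key 1 1; have e12 := key 1 2
  have e20 := key 2 0; have e21 := key 2 1; have e22 := key 2 2
  simp only [Fin.reduceEq, if_false, if_true, reduceIte] at e00 e01 e02 e10 e11 e12 e20 e21 e22
  simp only [vdiv, Fin.sum_univ_three]
  linear_combination
    pd 0 (fun z => H z 0) (X y) * e00 + pd 0 (fun z => H z 1) (X y) * e01
    + pd 0 (fun z => H z 2) (X y) * e02
    + pd 1 (fun z => H z 0) (X y) * e10 + pd 1 (fun z => H z 1) (X y) * e11
    + pd 1 (fun z => H z 2) (X y) * e12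
    + pd 2 (fun z => H z 0) (X y) * e20 + pd 2 (fun z => H z 1) (X y) * e21
    + pd 2 (fun z => H z 2) (X y) * e22


end Paper
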